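/- arXiv:1109.4138 — 3 statements merged into one kernel-verified Lean document; each statement's English description precedes it below -/
import Mathlib

section
/- Kemperman's formula: if (W_n)_{n≥0} is a random walk on ℤ started at 0 whose jump distribution ν is supported on {-1,0,1,2,…}, and ζ_j = inf{n ≥ 0 : W_n = -j} for j ≥ 1, then for all integers 1 ≤ j ≤ n, P[ζ_j = n] = (j/n) · P[W_n = -j]. -/
/-!
The law of the first `n` increments is `ν^⊗n`, which is invariant under cyclic rotations of the
coordinates. Cycle lemma: among the `n` rotations of an increment vector with entries `≥ -1` and
sum `-j`, exactly `j` first reach `-j` at time `n`. Indeed, the rotation started at `r` does so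
iff `r + n` is a strict new minimum of the periodically extended walk, and since the walk is
skip-free its running minimum drops by one at each such time and by `j` over a period.
Averaging over the rotations gives `n P[ζ_j = n] = j P[W_n = -j]`.
-/

open MeasureTheory ProbabilityTheory Finset
open scoped ENNReal

namespace Kemperman

section CycleLemma

def partialSum (y : ℕ → ℤ) (t : ℕ) : ℤ := ∑ i ∈ range t, y i

def FirstHitsAt (y : ℕ → ℤ) (a : ℤ) (n : ℕ) : Prop :=
  partialSum y n = a ∧ ∀ m < n, partialSum y m ≠ a

def IsNewMin (y : ℕ → ℤ) (t : ℕ) : Prop := ∀ m < t, partialSum y t < partialSum y m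

instance (y : ℕ → ℤ) (a : ℤ) (n : ℕ) : Decidable (FirstHitsAt y a n) :=
  inferInstanceAs (Decidable (_ ∧ _))

instance (y : ℕ → ℤ) : DecidablePred (IsNewMin y) := fun t =>
  inferInstanceAs (Decidable (∀ m < t, _))

variable {y : ℕ → ℤ} {n j : ℕ}

@[simp] lemma partialSum_zero (y : ℕ → ℤ) : partialSum y 0 = 0 := sum_range_zero _

lemma partialSum_succ (y : ℕ → ℤ) (t : ℕ) : partialSum y (t + 1) = partialSum y t + y t :=
  sum_range_succ _ _

lemma partialSum_shift (y : ℕ → ℤ) (r m : ℕ) :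
    partialSum (fun i => y (r + i)) m = partialSum y (r + m) - partialSum y r := by
  simp [partialSum, sum_range_add]

lemma partialSum_add_period (hper : Function.Periodic y n) (r : ℕ) :
    partialSum y (r + n) = partialSum y r + partialSum y n := by
  induction r with
  | zero => simp
  | succ r ih =>
    rw [Nat.add_right_comm, partialSum_succ, ih, hper, partialSum_succ]
    ring

lemma sInf_eq_iff_firstHitsAt {a : ℤ} (hn : n ≠ 0) :
    sInf {m | partialSum y m = a} = n ↔ FirstHitsAt y a n := by
  constructor
  · rintro rfl
    have hne : {m | partialSum y m = a}.Nonempty :=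
      Nat.nonempty_of_pos_sInf (Nat.pos_of_ne_zero hn)
    exact ⟨Nat.sInf_mem hne, fun m hm => Nat.notMem_of_lt_sInf hm⟩
  · rintro ⟨hhit, hbefore⟩
    exact le_antisymm (Nat.sInf_le hhit)
      (le_csInf ⟨n, hhit⟩ fun m hm => not_lt.1 fun hlt => hbefore m hlt hm)

lemma lt_partialSum_of_forall_ne (hy : ∀ i, -1 ≤ y i) {a : ℤ} (ha : a < 0)
    (h : ∀ m < n, partialSum y m ≠ a) : ∀ m < n, a < partialSum y m := by
  intro m hm
  induction m with
  | zero => simpa using ha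
  | succ m ih =>
    have hne := h (m + 1) hm
    rw [partialSum_succ] at hne ⊢
    have hprev := ih (by omega)
    have hstep := hy m
    omega

/-- Time `0` is counted as a new minimum, hence the `1 -`. -/
theorem isLeast_partialSum_image_Iic (hy : ∀ i, -1 ≤ y i) (t : ℕ) :
    IsLeast (partialSum y '' Set.Iic t) (1 - Nat.count (IsNewMin y) (t + 1)) := by
  induction t with
  | zero =>
    refine ⟨⟨0, Set.self_mem_Iic, by simp [Nat.count_succ, IsNewMin]⟩, ?_⟩
    rintro _ ⟨m, hm, rfl⟩
    obtain rfl : m = 0 := Nat.le_zero.1 hm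
    simp [Nat.count_succ, IsNewMin]
  | succ t ih =>
    obtain ⟨⟨m₀, hm₀, hmin⟩, hlow⟩ := ih
    replace hlow : ∀ m ≤ t, 1 - (Nat.count (IsNewMin y) (t + 1) : ℤ) ≤ partialSum y m :=
      fun m hm => hlow ⟨m, hm, rfl⟩
    have hnew : IsNewMin y (t + 1) ↔
        partialSum y (t + 1) < 1 - Nat.count (IsNewMin y) (t + 1) :=
      ⟨fun h => hmin ▸ h m₀ (Nat.lt_succ_of_le hm₀),
        fun h m hm => h.trans_le (hlow m (Nat.le_of_lt_succ hm))⟩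
    have hstep : partialSum y t - 1 ≤ partialSum y (t + 1) := by
      rw [partialSum_succ]; linarith [hy t]
    have hprev := hlow t le_rfl
    rw [Nat.count_succ]
    split_ifs with h
    · replace h := hnew.1 h
      refine ⟨⟨t + 1, Set.self_mem_Iic, by push_cast; omega⟩, ?_⟩
      rintro _ ⟨m, hm, rfl⟩
      rcases (Set.mem_Iic.1 hm).lt_or_eq with hm | rfl
      · have := hlow m (Nat.le_of_lt_succ hm); push_cast; omega
      · push_cast; omega
    · replace h := not_lt.1 (hnew.not.1 h)
      refine ⟨⟨m₀, Nat.le_succ_of_le hm₀, by simpa using hmin⟩, ?_⟩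
      rintro _ ⟨m, hm, rfl⟩
      rcases (Set.mem_Iic.1 hm).lt_or_eq with hm | rfl
      · simpa using hlow m (Nat.le_of_lt_succ hm)
      · simpa using h

theorem isLeast_partialSum_image_Iic_add_period (hper : Function.Periodic y n)
    (hsum : partialSum y n = -j) {t : ℕ} (hnt : n ≤ t + 1) {a : ℤ}
    (h : IsLeast (partialSum y '' Set.Iic t) a) :
    IsLeast (partialSum y '' Set.Iic (t + n)) (a - j) := by
  obtain ⟨⟨m₀, hm₀, hmin⟩, hlow⟩ := h
  refine ⟨⟨m₀ + n, Nat.add_le_add_right hm₀ n, ?_⟩, ?_⟩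
  · rw [partialSum_add_period hper, hmin, hsum]; ring
  · rintro _ ⟨m, hm, rfl⟩
    rcases le_or_gt m t with hmt | hmt
    · have := hlow ⟨m, hmt, rfl⟩; omega
    · obtain ⟨k, rfl⟩ : ∃ k, m = k + n := ⟨m - n, by simp only [Set.mem_Iic] at hm; omega⟩
      have := hlow ⟨k, by simp only [Set.mem_Iic] at hm ⊢; omega, rfl⟩
      rw [partialSum_add_period hper, hsum]; omega

theorem count_isNewMin_shift (hy : ∀ i, -1 ≤ y i) (hper : Function.Periodic y n)
    (hsum : partialSum y n = -j) (hj : 0 < j) : Nat.count (fun k => IsNewMin y (n + k)) n = j := by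
  obtain ⟨t, rfl⟩ : ∃ t, n = t + 1 := Nat.exists_eq_succ_of_ne_zero <| by
    rintro rfl; rw [partialSum_zero] at hsum; omega
  have h₁ := isLeast_partialSum_image_Iic hy t
  have h₂ := isLeast_partialSum_image_Iic hy (t + (t + 1))
  have := h₂.unique (isLeast_partialSum_image_Iic_add_period hper hsum le_rfl h₁)
  have hadd := Nat.count_add (IsNewMin y) (t + 1) (t + 1)
  rw [show t + (t + 1) + 1 = t + 1 + (t + 1) by ring] at this
  omega

theorem firstHitsAt_shift_iff (hy : ∀ i, -1 ≤ y i) (hper : Function.Periodic y n)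
    (hsum : partialSum y n = -j) (hj : 0 < j) {r : ℕ} (hr : r < n) :
    FirstHitsAt (fun i => y (r + i)) (-j) n ↔ IsNewMin y (r + n) := by
  have hwindow := partialSum_add_period hper r
  simp only [FirstHitsAt, partialSum_shift, IsNewMin]
  constructor
  · rintro ⟨-, hne⟩
    have hgt := lt_partialSum_of_forall_ne (fun i => hy (r + i)) (by omega : -(j : ℤ) < 0)
      (fun m hm => by rw [partialSum_shift]; exact hne m hm)
    simp only [partialSum_shift] at hgt
    intro m hm
    rcases le_or_gt r m with hrm | hrm
    · obtain ⟨k, rfl⟩ : ∃ k, m = r + k := ⟨m - r, by omega⟩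
      have := hgt k (by omega); omega
    · have := hgt (m + n - r) (by omega)
      rw [show r + (m + n - r) = m + n by omega, partialSum_add_period hper] at this
      omega
  · intro h
    refine ⟨by omega, fun m hm => ?_⟩
    have := h (r + m) (by omega)
    omega

theorem card_filter_firstHitsAt_shift (hy : ∀ i, -1 ≤ y i) (hper : Function.Periodic y n)
    (hsum : partialSum y n = -j) (hj : 0 < j) :
    #{r ∈ range n | FirstHitsAt (fun i => y (r + i)) (-j) n} = j := by
  rw [filter_congr fun r hr => firstHitsAt_shift_iff hy hper hsum hj (mem_range.1 hr),
    ← count_isNewMin_shift hy hper hsum hj, Nat.count_eq_card_filter_range]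
  simp_rw [add_comm]

end CycleLemma

theorem card_mul_measure_eq_of_ae_card {α ι : Type*} [MeasurableSpace α] [Fintype ι]
    {μ : Measure α} {T : ι → α → α} (hT : ∀ c, MeasurePreserving (T c) μ μ) {A B : Set α}
    [DecidablePred (· ∈ A)] [DecidablePred (· ∈ B)] (hA : MeasurableSet A) (hB : MeasurableSet B)
    {k : ℕ} (h : ∀ᵐ x ∂μ, #{c | T c x ∈ A} = if x ∈ B then k else 0) :
    Fintype.card ι * μ A = k * μ B := calc
  (Fintype.card ι : ℝ≥0∞) * μ A = ∑ c, ∫⁻ x, (T c ⁻¹' A).indicator 1 x ∂μ := by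
    simp [lintegral_indicator_one ((hT _).measurable hA),
      (hT _).measure_preimage hA.nullMeasurableSet]
  _ = ∫⁻ x, ∑ c, (T c ⁻¹' A).indicator 1 x ∂μ :=
    (lintegral_finsetSum _ fun c _ => measurable_one.indicator ((hT c).measurable hA)).symm
  _ = ∫⁻ x, B.indicator (fun _ => (k : ℝ≥0∞)) x ∂μ := by
    refine lintegral_congr_ae (h.mono fun x hx => ?_)
    have hcount : ∑ c, (T c ⁻¹' A).indicator 1 x = (#{c | T c x ∈ A} : ℝ≥0∞) := by
      rw [natCast_card_filter]
      exact sum_congr rfl fun c _ => by simp only [Set.indicator, Set.mem_preimage, Pi.one_apply]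
    beta_reduce
    rw [hcount, hx]
    by_cases hxB : x ∈ B <;> simp [hxB]
  _ = k * μ B := lintegral_indicator_const hB _

lemma measurePreserving_comp_equiv {ι α : Type*} [Fintype ι] [MeasurableSpace α]
    (ν : Measure α) [SigmaFinite ν] (e : ι ≃ ι) :
    MeasurePreserving (fun x : ι → α => x ∘ e) (Measure.pi fun _ => ν)
      (Measure.pi fun _ => ν) := by
  convert measurePreserving_piCongrLeft (fun _ => ν) e.symm using 1
  ext x i
  simp [MeasurableEquiv.piCongrLeft, Equiv.piCongrLeft]

lemma ae_neg_one_le_pi {ι : Type*} [Fintype ι] {ν : Measure ℤ} [SigmaFinite ν]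
    (hν : ∀ k : ℤ, k ≤ -2 → ν {k} = 0) :
    ∀ᵐ x ∂Measure.pi (fun _ : ι => ν), ∀ i, -1 ≤ x i :=
  ae_all_iff.2 fun _ => Measure.tendsto_eval_ae_ae.eventually <|
    ae_iff_of_countable.2 fun k hk => by by_contra h; exact hk (hν k (by omega))

section Configurations

variable {n : ℕ} [NeZero n]

def periodicExt (x : Fin n → ℤ) (i : ℕ) : ℤ := x (Fin.ofNat n i)

lemma periodic_periodicExt (x : Fin n → ℤ) : Function.Periodic (periodicExt x) n := by
  intro i
  simp only [periodicExt]
  congr 1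
  ext
  simp

lemma periodicExt_rotate (x : Fin n → ℤ) (c : Fin n) (i : ℕ) :
    periodicExt (fun k => x (c + k)) i = periodicExt x (c + i) := by
  simp only [periodicExt]
  congr 1
  ext
  simp [Fin.val_add, Nat.add_mod]

lemma partialSum_periodicExt_of_le {x : Fin n → ℤ} {y : ℕ → ℤ} (hxy : ∀ i : Fin n, x i = y i)
    {m : ℕ} (hm : m ≤ n) : partialSum (periodicExt x) m = partialSum y m :=
  sum_congr rfl fun i hi => by
    simp [periodicExt, hxy, Nat.mod_eq_of_lt ((mem_range.1 hi).trans_le hm)]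

lemma firstHitsAt_periodicExt_iff {x : Fin n → ℤ} {y : ℕ → ℤ} (hxy : ∀ i : Fin n, x i = y i)
    {a : ℤ} : FirstHitsAt (periodicExt x) a n ↔ FirstHitsAt y a n := by
  simp only [FirstHitsAt, partialSum_periodicExt_of_le hxy le_rfl]
  exact and_congr_right' <| forall₂_congr fun m hm => by
    rw [partialSum_periodicExt_of_le hxy hm.le]

theorem card_rotate_firstHitsAt {x : Fin n → ℤ} (hx : ∀ i, -1 ≤ x i) {j : ℕ} (hj : 0 < j) :
    #{c : Fin n | FirstHitsAt (periodicExt fun k => x (c + k)) (-j) n} =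
      if partialSum (periodicExt x) n = -j then j else 0 := by
  have hper := periodic_periodicExt x
  simp_rw [funext (periodicExt_rotate x _), card_filter]
  rw [Fin.sum_univ_eq_sum_range (fun r => if FirstHitsAt (fun i => periodicExt x (r + i)) (-j) n
    then 1 else 0), ← card_filter]
  split_ifs with hsum
  · exact card_filter_firstHitsAt_shift (fun i => hx _) hper hsum hj
  · refine card_eq_zero.2 <| filter_eq_empty_iff.2 fun r _ hr => hsum ?_
    rw [← hr.1, partialSum_shift, partialSum_add_period hper]
    ring

theorem card_mul_measure_firstHitsAt {ν : Measure ℤ} [SigmaFinite ν]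
    (hν : ∀ k : ℤ, k ≤ -2 → ν {k} = 0) {j : ℕ} (hj : 0 < j) :
    n * Measure.pi (fun _ : Fin n => ν) {x | FirstHitsAt (periodicExt x) (-j) n} =
      j * Measure.pi (fun _ : Fin n => ν) {x | partialSum (periodicExt x) n = -j} := by
  simpa using card_mul_measure_eq_of_ae_card
    (fun c => measurePreserving_comp_equiv ν (Equiv.addLeft c)) .of_discrete .of_discrete
    ((ae_neg_one_le_pi hν).mono fun x hx => card_rotate_firstHitsAt hx hj)

end Configurations

end Kemperman

open Kemperman

theorem stmt2_general {Ω : Type*} [MeasurableSpace Ω] (P : Measure Ω)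
    (ν : Measure ℤ) [IsProbabilityMeasure ν]
    (hν : ∀ k : ℤ, k ≤ -2 → ν {k} = 0)
    (ξ : ℕ → Ω → ℤ) (hmeas : ∀ i, Measurable (ξ i))
    (hindep : iIndepFun ξ P)
    (hdist : ∀ i, Measure.map (ξ i) P = ν)
    (W : ℕ → Ω → ℤ) (hW : ∀ n ω, W n ω = ∑ i ∈ Finset.range n, ξ i ω)
    (ζ : ℕ → Ω → ℕ) (hζ : ∀ j ω, ζ j ω = sInf {m : ℕ | W m ω = -(j : ℤ)})
    (j n : ℕ) (hj : 1 ≤ j) (hjn : j ≤ n) :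
    (P {ω | ζ j ω = n}).toReal = (j : ℝ) / n * (P {ω | W n ω = -(j : ℤ)}).toReal := by
  have hn : n ≠ 0 := by omega
  have : NeZero n := ⟨hn⟩
  set X : Ω → Fin n → ℤ := fun ω i => ξ i ω
  have hX : P.map X = Measure.pi fun _ => ν := by
    rw [iIndepFun.map_fun_eq_pi_map (fun i : Fin n => (hmeas i).aemeasurable)
      (hindep.precomp Fin.val_injective)]
    simp [hdist]
  have hWX : ∀ m ω, W m ω = partialSum (fun i => ξ i ω) m := hW
  have hζX : {ω | ζ j ω = n} = X ⁻¹' {x | FirstHitsAt (periodicExt x) (-j) n} := by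
    ext ω
    simp only [Set.mem_ofPred_eq, Set.mem_preimage, hζ, hWX, sInf_eq_iff_firstHitsAt hn]
    exact (firstHitsAt_periodicExt_iff fun _ => rfl).symm
  have hWB : {ω | W n ω = -j} = X ⁻¹' {x | partialSum (periodicExt x) n = -j} := by
    ext ω
    simp only [Set.mem_ofPred_eq, Set.mem_preimage, hWX]
    rw [partialSum_periodicExt_of_le (x := X ω) (y := fun k => ξ k ω) (fun _ => rfl) le_rfl]
  rw [hζX, hWB, ← Measure.map_apply (by fun_prop) .of_discrete,
    ← Measure.map_apply (by fun_prop) .of_discrete, hX]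
  have key := congrArg ENNReal.toReal (card_mul_measure_firstHitsAt (n := n) hν hj)
  simp only [ENNReal.toReal_mul, ENNReal.toReal_natCast] at key
  field_simp
  linarith

/-- Kemperman's formula: if (W_n) is a random walk on ℤ started at 0 whose i.i.d.
jump distribution ν is supported on {-1,0,1,2,…}, and ζ_j is the first hitting time
of -j, then for all 1 ≤ j ≤ n, P[ζ_j = n] = (j/n) · P[W_n = -j]. -/
theorem stmt2 {Ω : Type*} [MeasurableSpace Ω] (P : Measure Ω) [IsProbabilityMeasure P]
    (ν : Measure ℤ) [IsProbabilityMeasure ν]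
    (hν : ∀ k : ℤ, k ≤ -2 → ν {k} = 0)
    (ξ : ℕ → Ω → ℤ) (hmeas : ∀ i, Measurable (ξ i))
    (hindep : iIndepFun ξ P)
    (hdist : ∀ i, Measure.map (ξ i) P = ν)
    (W : ℕ → Ω → ℤ) (hW : ∀ n ω, W n ω = ∑ i ∈ Finset.range n, ξ i ω)
    (ζ : ℕ → Ω → ℕ) (hζ : ∀ j ω, ζ j ω = sInf {m : ℕ | W m ω = -(j : ℤ)})
    (j n : ℕ) (hj : 1 ≤ j) (hjn : j ≤ n) :
    (P {ω | ζ j ω = n}).toReal = (j : ℝ) / n * (P {ω | W n ω = -(j : ℤ)}).toReal :=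
  stmt2_general P ν hν ξ hmeas hindep hdist W hW ζ hζ j n hj hjn
end

section
/- Let (a_n)_{n≥1} be an increasing sequence of positive reals such that a_{kn}/a_n → k^{1/θ} as n → ∞ for every positive integer k, where θ ∈ (1,2]. Then there exists a slowly varying function l : ℝ₊ → ℝ₊ such that a_n = n^{1/θ} l(n) for every positive integer n. -/
open Filter

/-- A positive measurable function is slowly varying if it is eventually positive
and l(tx)/l(x) → 1 as x → ∞ for all t > 0. -/
def SlowlyVarying (l : ℝ → ℝ) : Prop :=
  (∀ᶠ x in atTop, 0 < l x) ∧
    ∀ t : ℝ, 0 < t → Tendsto (fun x => l (t * x) / l x) atTop (nhds 1)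

/-!
Write `ρ = 1/θ`, `f x = a ⌊x⌋₊` and `l x = f x / x ^ ρ`. Then `l` is slowly varying as soon
as `f (t x) / f x → t ^ ρ` for every real `t > 0`. For `t = k ∈ ℕ` this is the hypothesis, once
one knows `a (n + 1) / a n → 1`, which follows by squeezing that ratio between `1` and
`a ((k + 1) m) / a (k m)` with `m = n / k`. The set of `t` for which the limit holds is closed
under products and inverses, so it contains the positive rationals; as `f (t x) / f x` is
monotone in `t` and `t ^ ρ` is continuous, it then contains every `t > 0`.
-/

open Topology

section Ratio

variable {f : ℝ → ℝ} {s t L M ρ : ℝ}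

theorem tendsto_ratio_mul (hf : ∀ᶠ x in atTop, f x ≠ 0) (ht : 0 < t)
    (hs : Tendsto (fun x => f (s * x) / f x) atTop (𝓝 L))
    (ht' : Tendsto (fun x => f (t * x) / f x) atTop (𝓝 M)) :
    Tendsto (fun x => f (s * t * x) / f x) atTop (𝓝 (L * M)) := by
  have htx : Tendsto (t * ·) atTop atTop := tendsto_id.const_mul_atTop ht
  refine ((hs.comp htx).mul ht').congr' ?_
  filter_upwards [htx.eventually hf] with x hx
  simp only [Function.comp_apply, mul_assoc, div_mul_div_cancel₀ hx]

theorem tendsto_ratio_inv (ht : 0 < t) (hL : L ≠ 0)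
    (h : Tendsto (fun x => f (t * x) / f x) atTop (𝓝 L)) :
    Tendsto (fun x => f (t⁻¹ * x) / f x) atTop (𝓝 L⁻¹) := by
  refine ((h.comp (tendsto_id.const_mul_atTop (inv_pos.2 ht))).inv₀ hL).congr fun x => ?_
  simp only [Function.comp_apply, id, ← mul_assoc, mul_inv_cancel₀ ht.ne', one_mul, inv_div]

theorem eventually_ratio_le_of_le (hf : Monotone f) (hf0 : ∀ᶠ x in atTop, 0 < f x)
    (hst : s ≤ t) : ∀ᶠ x in atTop, f (s * x) / f x ≤ f (t * x) / f x := by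
  filter_upwards [hf0, eventually_ge_atTop 0] with x hx hx0
  exact div_le_div_of_nonneg_right (hf (mul_le_mul_of_nonneg_right hst hx0)) hx.le

theorem tendsto_ratio_of_forall_rat (hf : Monotone f) (hf0 : ∀ᶠ x in atTop, 0 < f x)
    {φ : ℝ → ℝ} (ht : 0 < t) (hφ : ContinuousAt φ t)
    (hq : ∀ q : ℚ, 0 < q → Tendsto (fun x => f (q * x) / f x) atTop (𝓝 (φ q))) :
    Tendsto (fun x => f (t * x) / f x) atTop (𝓝 (φ t)) := by
  rw [tendsto_order]
  constructor
  · intro c hc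
    obtain ⟨l, u, ⟨hlt, htu⟩, hsub⟩ :=
      mem_nhds_iff_exists_Ioo_subset.1 (hφ.eventually (lt_mem_nhds hc))
    obtain ⟨q, hlq, hqt⟩ := exists_rat_btwn (max_lt hlt ht)
    have hq0 : (0 : ℝ) < q := (le_max_right _ _).trans_lt hlq
    have hcq : c < φ q := hsub ⟨(le_max_left _ _).trans_lt hlq, hqt.trans htu⟩
    filter_upwards [(hq q (by exact_mod_cast hq0)).eventually (lt_mem_nhds hcq),
      eventually_ratio_le_of_le hf hf0 hqt.le] with x hcx hle
    exact hcx.trans_le hle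
  · intro c hc
    obtain ⟨l, u, ⟨hlt, htu⟩, hsub⟩ :=
      mem_nhds_iff_exists_Ioo_subset.1 (hφ.eventually (gt_mem_nhds hc))
    obtain ⟨q, htq, hqu⟩ := exists_rat_btwn htu
    have hq0 : (0 : ℝ) < q := ht.trans htq
    have hqc : φ q < c := hsub ⟨hlt.trans htq, hqu⟩
    filter_upwards [(hq q (by exact_mod_cast hq0)).eventually (gt_mem_nhds hqc),
      eventually_ratio_le_of_le hf hf0 htq.le] with x hxc hle
    exact hle.trans_lt hxc

theorem slowlyVarying_div_rpow (hf0 : ∀ᶠ x in atTop, 0 < f x)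
    (h : ∀ t, 0 < t → Tendsto (fun x => f (t * x) / f x) atTop (𝓝 (t ^ ρ))) :
    SlowlyVarying fun x => f x / x ^ ρ := by
  refine ⟨?_, fun t ht => ?_⟩
  · filter_upwards [hf0, eventually_gt_atTop 0] with x hfx hx
    positivity
  have htρ : t ^ ρ ≠ 0 := (Real.rpow_pos_of_pos ht ρ).ne'
  refine (div_self htρ ▸ (h t ht).div_const (t ^ ρ)).congr' ?_
  filter_upwards [hf0, eventually_gt_atTop 0] with x hfx hx
  have hxρ : x ^ ρ ≠ 0 := (Real.rpow_pos_of_pos hx ρ).ne'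
  rw [Real.mul_rpow ht.le hx.le]
  field_simp

end Ratio

section Sequence

variable {a : ℕ → ℝ} {ρ : ℝ}

theorem eventually_floor_pos (hpos : ∀ n : ℕ, 1 ≤ n → 0 < a n) :
    ∀ᶠ x : ℝ in atTop, 0 < a ⌊x⌋₊ := by
  filter_upwards [eventually_ge_atTop 1] with x hx using hpos _ ((Nat.one_le_floor_iff x).2 hx)

theorem tendsto_mul_div_mul (hpos : ∀ n : ℕ, 1 ≤ n → 0 < a n)
    (hlim : ∀ k : ℕ, 1 ≤ k →
      Tendsto (fun n => a (k * n) / a n) atTop (𝓝 ((k : ℝ) ^ ρ)))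
    {p q : ℕ} (hp : 1 ≤ p) (hq : 1 ≤ q) :
    Tendsto (fun n => a (p * n) / a (q * n)) atTop (𝓝 (((p : ℝ) / q) ^ ρ)) := by
  have hqρ : (q : ℝ) ^ ρ ≠ 0 := (Real.rpow_pos_of_pos (by exact_mod_cast hq) ρ).ne'
  rw [Real.div_rpow (Nat.cast_nonneg p) (Nat.cast_nonneg q)]
  refine ((hlim p hp).div (hlim q hq) hqρ).congr' ?_
  filter_upwards [eventually_ge_atTop 1] with n hn
  exact div_div_div_cancel_right₀ (hpos n hn).ne' _ _

theorem tendsto_succ_div_self (hpos : ∀ n : ℕ, 1 ≤ n → 0 < a n) (hmono : Monotone a)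
    (hlim : ∀ k : ℕ, 1 ≤ k →
      Tendsto (fun n => a (k * n) / a n) atTop (𝓝 ((k : ℝ) ^ ρ))) :
    Tendsto (fun n => a (n + 1) / a n) atTop (𝓝 1) := by
  rw [tendsto_order]
  refine ⟨fun c hc => ?_, fun c hc => ?_⟩
  · filter_upwards [eventually_ge_atTop 1] with n hn
    exact hc.trans_le ((one_le_div (hpos n hn)).2 (hmono n.le_succ))
  have hratio : Tendsto (fun k : ℕ => (((k + 1 : ℕ) : ℝ) / k) ^ ρ) atTop (𝓝 1) := by
    have h := (tendsto_natCast_div_add_atTop (1 : ℝ)).inv₀ one_ne_zero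
    simp only [inv_div, inv_one] at h
    simpa [Function.comp_def] using
      (Real.continuousAt_rpow_const 1 ρ (Or.inl one_ne_zero)).tendsto.comp h
  obtain ⟨k, hkc, hk⟩ :=
    ((hratio.eventually (gt_mem_nhds hc)).and (eventually_ge_atTop 1)).exists
  have hm := (tendsto_mul_div_mul hpos hlim (by omega : 1 ≤ k + 1) hk).comp
    (Nat.tendsto_div_const_atTop (by omega : k ≠ 0))
  filter_upwards [hm.eventually (gt_mem_nhds hkc), eventually_ge_atTop (k * k)] with n hlt hn
  -- with `m = n / k ≥ k`, both `n` and `n + 1` lie in `[k m, (k + 1) m]`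
  have hkm : k ≤ n / k := (Nat.le_div_iff_mul_le (by omega)).2 hn
  have hlow : k * (n / k) ≤ n := Nat.mul_div_le n k
  have hup : n + 1 ≤ (k + 1) * (n / k) := by
    have := Nat.lt_mul_div_succ n (by omega : 0 < k)
    rw [add_mul]
    rw [mul_add] at this
    omega
  have hpos_km : 0 < a (k * (n / k)) := hpos _ (by nlinarith)
  calc a (n + 1) / a n ≤ a ((k + 1) * (n / k)) / a (k * (n / k)) :=
        div_le_div₀ (hpos_km.trans_le (hmono (by omega))).le (hmono hup) hpos_km (hmono hlow)
    _ < c := hlt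

theorem tendsto_floor_mul_div_floor (hpos : ∀ n : ℕ, 1 ≤ n → 0 < a n)
    (hmono : Monotone a)
    (hlim : ∀ k : ℕ, 1 ≤ k →
      Tendsto (fun n => a (k * n) / a n) atTop (𝓝 ((k : ℝ) ^ ρ)))
    {k : ℕ} (hk : 1 ≤ k) :
    Tendsto (fun x : ℝ => a ⌊k * x⌋₊ / a ⌊x⌋₊) atTop (𝓝 ((k : ℝ) ^ ρ)) := by
  have hupper : Tendsto (fun n => a (k * (n + 1)) / a n) atTop (𝓝 ((k : ℝ) ^ ρ)) := by
    have h := ((hlim k hk).comp (tendsto_add_atTop_nat 1)).mul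
      (tendsto_succ_div_self hpos hmono hlim)
    rw [mul_one] at h
    refine h.congr' ?_
    filter_upwards [eventually_ge_atTop 1] with n hn
    exact div_mul_div_cancel₀ (hpos (n + 1) (by omega)).ne'
  refine tendsto_of_tendsto_of_tendsto_of_le_of_le'
    ((hlim k hk).comp tendsto_nat_floor_atTop) (hupper.comp tendsto_nat_floor_atTop) ?_ ?_
  all_goals
    filter_upwards [eventually_ge_atTop 1, eventually_floor_pos hpos] with x hx hfx
    refine div_le_div_of_nonneg_right (hmono ?_) hfx.le
  · refine Nat.le_floor ?_
    push_cast
    exact mul_le_mul_of_nonneg_left (Nat.floor_le (zero_le_one.trans hx)) k.cast_nonneg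
  · refine Nat.floor_le_of_le ?_
    push_cast
    exact mul_le_mul_of_nonneg_left (Nat.lt_floor_add_one x).le k.cast_nonneg

theorem tendsto_floor_rat_mul_div_floor (hpos : ∀ n : ℕ, 1 ≤ n → 0 < a n)
    (hmono : Monotone a)
    (hlim : ∀ k : ℕ, 1 ≤ k →
      Tendsto (fun n => a (k * n) / a n) atTop (𝓝 ((k : ℝ) ^ ρ)))
    {q : ℚ} (hq : 0 < q) :
    Tendsto (fun x : ℝ => a ⌊q * x⌋₊ / a ⌊x⌋₊) atTop (𝓝 ((q : ℝ) ^ ρ)) := by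
  obtain ⟨p, hp⟩ := Int.eq_ofNat_of_zero_le (Rat.num_nonneg.2 hq.le)
  have hp1 : 1 ≤ p := by
    have := Rat.num_pos.2 hq
    omega
  have hden : 0 < (q.den : ℝ) := by exact_mod_cast q.pos
  have hcast : (q : ℝ) = p * (q.den : ℝ)⁻¹ := by
    rw [Rat.cast_def, hp, div_eq_mul_inv]
    norm_cast
  have h := tendsto_ratio_mul (f := fun x => a ⌊x⌋₊)
    ((eventually_floor_pos hpos).mono fun _ hx => hx.ne') (inv_pos.2 hden)
    (tendsto_floor_mul_div_floor hpos hmono hlim hp1)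
    (tendsto_ratio_inv (f := fun x => a ⌊x⌋₊) hden (Real.rpow_pos_of_pos hden ρ).ne'
      (tendsto_floor_mul_div_floor hpos hmono hlim q.pos))
  rwa [← Real.inv_rpow hden.le, ← Real.mul_rpow p.cast_nonneg (inv_nonneg.2 hden.le),
    ← hcast] at h

end Sequence

theorem stmt7_general (θ : ℝ) (a : ℕ → ℝ)
    (hpos : ∀ n : ℕ, 1 ≤ n → 0 < a n) (hmono : Monotone a)
    (hlim : ∀ k : ℕ, 1 ≤ k →
      Tendsto (fun n => a (k * n) / a n) atTop (nhds ((k : ℝ) ^ (1 / θ)))) :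
    ∃ l : ℝ → ℝ, Measurable l ∧ SlowlyVarying l ∧
      ∀ n : ℕ, 1 ≤ n → a n = (n : ℝ) ^ (1 / θ) * l n := by
  refine ⟨fun x => a ⌊x⌋₊ / x ^ (1 / θ), ?_,
    slowlyVarying_div_rpow (eventually_floor_pos hpos) fun t ht => ?_, fun n hn => ?_⟩
  · exact (measurable_from_nat.comp Nat.measurable_floor).div (measurable_id.pow_const _)
  · exact tendsto_ratio_of_forall_rat (hmono.comp Nat.floor_mono) (eventually_floor_pos hpos)
      ht (Real.continuousAt_rpow_const t _ (Or.inl ht.ne'))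
      fun q hq => tendsto_floor_rat_mul_div_floor hpos hmono hlim hq
  · have hn0 : (0 : ℝ) < n := by exact_mod_cast hn
    beta_reduce
    rw [Nat.floor_natCast, mul_div_cancel₀ _ (Real.rpow_pos_of_pos hn0 _).ne']

/-- De Haan's theorem for monotone sequences: if (a_n) is an increasing positive
sequence with a_{kn}/a_n → k^{1/θ} for every positive integer k, θ ∈ (1,2],
then a_n = n^{1/θ} l(n) for some slowly varying l. -/
theorem stmt7 (θ : ℝ) (hθ1 : 1 < θ) (hθ2 : θ ≤ 2) (a : ℕ → ℝ)
    (hpos : ∀ n : ℕ, 1 ≤ n → 0 < a n) (hmono : Monotone a)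
    (hlim : ∀ k : ℕ, 1 ≤ k →
      Tendsto (fun n => a (k * n) / a n) atTop (nhds ((k : ℝ) ^ (1 / θ)))) :
    ∃ l : ℝ → ℝ, Measurable l ∧ SlowlyVarying l ∧
      ∀ n : ℕ, 1 ≤ n → a n = (n : ℝ) ^ (1 / θ) * l n :=
  stmt7_general θ a hpos hmono hlim
end

section
/- Contour/height comparison: for any plane tree τ with n = ζ(τ) vertices, let b_p = 2p − H_p(τ) for 0 ≤ p < n (the time at which the contour process visits the (p+1)-st vertex) and b_n = 2(n−1). Then C_{b_p}(τ) = H_p(τ), and for every 0 ≤ p < n, sup_{t ∈ [b_p, b_{p+1}]} |C_t(τ) − H_p(τ)| ≤ |H_{p+1}(τ) − H_p(τ)| + 1. -/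
/-- Rooted ordered (plane) trees: a node with an ordered list of subtrees. -/
inductive PTree : Type where
  | node : List PTree → PTree

namespace PTree

/-- Heights (generations) of the vertices of the tree, listed in lexicographical
(depth-first, preorder) order, the root being at height `h`. -/
def heightAux (h : ℕ) : PTree → List ℕ
  | node ts => h :: (ts.attach.map (fun x => heightAux (h + 1) x.1)).flatten
decreasing_by
  have := List.sizeOf_lt_of_mem x.2
  simp only [PTree.node.sizeOf_spec]
  omega

/-- The total progeny ζ(τ): the number of vertices of τ. -/
def progeny (τ : PTree) : ℕ := (heightAux 0 τ).length

/-- The (discrete) height function: H_p(τ) = |u(p)| is the generation of the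
(p+1)-st vertex in lexicographical order (0 for p ≥ ζ(τ)). -/
def H (τ : PTree) (p : ℕ) : ℕ := (heightAux 0 τ).getD p 0

/-- The heights of the particle performing the contour (depth-first) traversal of
the tree, at integer times 0, 1, …, 2(ζ(τ)-1), the root being at height `h`. -/
def contourAux (h : ℕ) : PTree → List ℕ
  | node ts => h :: (ts.attach.map (fun x => contourAux (h + 1) x.1 ++ [h])).flatten
decreasing_by
  have := List.sizeOf_lt_of_mem x.2
  simp only [PTree.node.sizeOf_spec]
  omega

/-- The contour function at integer times (0 for times ≥ 2(ζ(τ)-1)). -/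
def cseq (τ : PTree) (k : ℕ) : ℕ := (contourAux 0 τ).getD k 0

/-- The contour function C_t(τ), t ∈ [0, 2(ζ(τ)-1)], extended by linear
interpolation between integer times (and by 0 afterwards). -/
noncomputable def C (τ : PTree) (t : ℝ) : ℝ :=
  (1 - (t - (⌊t⌋₊ : ℝ))) * cseq τ ⌊t⌋₊ + (t - (⌊t⌋₊ : ℝ)) * cseq τ (⌊t⌋₊ + 1)

/-- b_p = 2p − H_p(τ), the time at which the contour particle first visits the
(p+1)-st vertex, with the convention b_{ζ(τ)} = 2(ζ(τ)−1). -/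
noncomputable def b (τ : PTree) (p : ℕ) : ℝ :=
  if p = progeny τ then 2 * ((progeny τ : ℝ) - 1) else 2 * p - H τ p

end PTree

/-!
Between its visits to `u(p)` and `u(p+1)`, the contour particle walks straight down from height
`H_p` to `H_{p+1} - 1` and then takes one step up to `u(p+1)`; after `u(ζ-1)` it walks down to the
root. So the contour sequence is the concatenation of the descents `H_p, H_p - 1, …, H_{p+1} - 1`,
of lengths `H_p + 2 - H_{p+1}`, which telescope to place the `p`-th descent at time `2p - H_p`.
On `[b_p, b_{p+1}]` the integer-time values therefore lie within `|H_{p+1} - H_p| + 1` of `H_p`,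
and a linear interpolation stays in any ball containing its nodes.
-/

noncomputable def linInterp (f : ℕ → ℝ) (t : ℝ) : ℝ :=
  (1 - (t - ⌊t⌋₊)) * f ⌊t⌋₊ + (t - ⌊t⌋₊) * f (⌊t⌋₊ + 1)

theorem linInterp_natCast (f : ℕ → ℝ) (k : ℕ) : linInterp f k = f k := by
  simp [linInterp]

theorem abs_linInterp_sub_le {f : ℕ → ℝ} {m n : ℕ} {c M : ℝ}
    (hf : ∀ k, m ≤ k → k ≤ n → |f k - c| ≤ M) {t : ℝ} (ht : t ∈ Set.Icc (m : ℝ) n) :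
    |linInterp f t - c| ≤ M := by
  obtain ⟨hmt, htn⟩ := ht
  rcases htn.eq_or_lt with rfl | htn
  · rw [linInterp_natCast]
    exact hf n (by exact_mod_cast hmt) le_rfl
  have ht₀ : 0 ≤ t := (Nat.cast_nonneg m).trans hmt
  have hm : m ≤ ⌊t⌋₊ := Nat.le_floor hmt
  have hn : ⌊t⌋₊ + 1 ≤ n := (Nat.floor_lt ht₀).2 htn
  have hfrac₀ : 0 ≤ t - ⌊t⌋₊ := sub_nonneg.2 (Nat.floor_le ht₀)
  have hfrac₁ : t - ⌊t⌋₊ ≤ 1 := by linarith [Nat.lt_floor_add_one t]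
  have := convex_closedBall c M
    (Metric.mem_closedBall.2 <| (Real.dist_eq _ _).trans_le (hf ⌊t⌋₊ hm (by omega)))
    (Metric.mem_closedBall.2 <| (Real.dist_eq _ _).trans_le (hf (⌊t⌋₊ + 1) (by omega) hn))
    (sub_nonneg.2 hfrac₁) hfrac₀ (sub_add_cancel _ _)
  rwa [Metric.mem_closedBall, Real.dist_eq, smul_eq_mul, smul_eq_mul] at this

namespace PTree

@[elab_as_elim]
theorem induction {motive : PTree → Prop}
    (node : ∀ ts, (∀ t ∈ ts, motive t) → motive (PTree.node ts)) (τ : PTree) : motive τ :=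
  PTree.rec (motive_2 := fun ts => ∀ t ∈ ts, motive t) node
    (fun _ h => absurd h List.not_mem_nil)
    (fun _ _ ht hts => List.forall_mem_cons.2 ⟨ht, hts⟩) τ

theorem heightAux_node (h : ℕ) (ts : List PTree) :
    heightAux h (node ts) = h :: (ts.map (heightAux (h + 1))).flatten := by
  rw [heightAux, List.attach_map_val]

theorem contourAux_node (h : ℕ) (ts : List PTree) :
    contourAux h (node ts) = h :: (ts.map fun t => contourAux (h + 1) t ++ [h]).flatten := by
  rw [contourAux, List.attach_map_val (f := fun t => contourAux (h + 1) t ++ [h])]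

theorem exists_heightAux_eq_cons (h : ℕ) (τ : PTree) : ∃ l, heightAux h τ = h :: l := by
  cases τ with
  | node ts => exact ⟨_, heightAux_node h ts⟩

theorem heightAux_ne_nil (h : ℕ) (τ : PTree) : heightAux h τ ≠ [] := by
  obtain ⟨l, hl⟩ := exists_heightAux_eq_cons h τ
  simp [hl]

theorem le_of_mem_heightAux {h x : ℕ} {τ : PTree} (hx : x ∈ heightAux h τ) : h ≤ x := by
  induction τ using induction generalizing h with
  | node ts ih =>
    rw [heightAux_node] at hx
    simp only [List.mem_cons, List.mem_flatten, List.mem_map] at hx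
    rcases hx with rfl | ⟨_, ⟨t, ht, rfl⟩, hx⟩
    · rfl
    · exact (ih t ht hx).trans' h.le_succ

theorem isChain_heightAux (h : ℕ) (τ : PTree) :
    (heightAux h τ).IsChain fun a b => b ≤ a + 1 := by
  induction τ using induction generalizing h with
  | node ts ih =>
    rw [heightAux_node, List.isChain_cons, List.isChain_flatten (by simp [heightAux_ne_nil])]
    refine ⟨fun y hy => ?_, by simpa using fun t ht => ih t ht (h + 1),
      (List.pairwise_of_forall_mem_list ?_).isChain⟩
    · cases ts with
      | nil => simp at hy
      | cons t _ =>
        obtain ⟨l, hl⟩ := exists_heightAux_eq_cons (h + 1) t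
        simp only [List.map_cons, hl, List.flatten_cons, List.cons_append, List.head?_cons,
          Option.mem_def, Option.some.injEq] at hy
        omega
    · simp only [List.mem_map]
      rintro _ ⟨t₁, -, rfl⟩ _ ⟨t₂, -, rfl⟩ x hx y hy
      obtain ⟨l, hl⟩ := exists_heightAux_eq_cons (h + 1) t₂
      simp only [hl, List.head?_cons, Option.mem_some_iff] at hy
      have := le_of_mem_heightAux (List.mem_of_mem_getLast? hx)
      omega

theorem flatten_map_heightAux_append_eq_cons (h : ℕ) (ts : List PTree) :
    ∃ M, (ts.map (heightAux (h + 1))).flatten ++ [h + 1] = (h + 1) :: M := by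
  cases ts with
  | nil => exact ⟨[], rfl⟩
  | cons t ts =>
    obtain ⟨l, hl⟩ := exists_heightAux_eq_cons (h + 1) t
    exact ⟨l ++ ((ts.map (heightAux (h + 1))).flatten ++ [h + 1]), by simp [hl]⟩

/-- `[a, a - 1, …, b - 1]`: the contour between the visits of consecutive vertices of heights
`a` and `b` in lexicographical order. -/
def descent (a b : ℕ) : List ℕ := (List.range (a + 2 - b)).map (a - ·)

def descents : List ℕ → List ℕ
  | a :: b :: l => descent a b ++ descents (b :: l)
  | _ => []

@[simp]
theorem descents_cons_cons (a b : ℕ) (l : List ℕ) :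
    descents (a :: b :: l) = descent a b ++ descents (b :: l) := rfl

@[simp]
theorem descents_singleton (a : ℕ) : descents [a] = [] := rfl

@[simp]
theorem length_descent (a b : ℕ) : (descent a b).length = a + 2 - b := by
  simp [descent]

theorem getD_descent {a b j : ℕ} (hj : j < a + 2 - b) : (descent a b).getD j 0 = a - j := by
  rw [List.getD_eq_getElem _ _ (by simpa using hj)]
  simp [descent]

theorem descent_succ_self (a : ℕ) : descent a (a + 1) = [a] := by
  simp [descent, show a + 2 - (a + 1) = 1 by omega]

theorem descent_succ {a h : ℕ} (hh : h ≤ a) : descent a (h + 1) = descent a (h + 2) ++ [h] := by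
  rw [descent, descent, show a + 2 - (h + 1) = (a - h) + 1 by omega,
    show a + 2 - (h + 2) = a - h by omega, List.range_succ, List.map_append]
  simp [show a - (a - h) = h by omega]

theorem descents_append : ∀ (L : List ℕ) (c : ℕ) (M : List ℕ),
    descents (L ++ c :: M) = descents (L ++ [c]) ++ descents (c :: M)
  | [], _, _ => rfl
  | [_], _, _ => by simp
  | a :: b :: L, c, M => by
    have := descents_append (b :: L) c M
    simp only [List.cons_append] at this ⊢
    rw [descents_cons_cons, descents_cons_cons, this, List.append_assoc]

theorem descents_append_succ {L : List ℕ} {h : ℕ} (hL : L ≠ []) (hle : ∀ x ∈ L, h ≤ x) :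
    descents (L ++ [h + 1]) = descents (L ++ [h + 2]) ++ [h] := by
  obtain ⟨L, a, rfl⟩ := (List.eq_nil_or_concat' L).resolve_left hL
  rw [List.append_assoc, List.append_assoc, List.singleton_append, List.singleton_append,
    descents_append L a [h + 1], descents_append L a [h + 2]]
  simp [descent_succ (hle a (by simp))]

theorem descents_flatten_map_heightAux (h : ℕ) (ts : List PTree)
    (ih : ∀ t ∈ ts, contourAux (h + 1) t = descents (heightAux (h + 1) t ++ [h + 2])) :
    descents ((ts.map (heightAux (h + 1))).flatten ++ [h + 1]) =
      (ts.map fun t => contourAux (h + 1) t ++ [h]).flatten := by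
  induction ts with
  | nil => rfl
  | cons t ts ihts =>
    obtain ⟨M, hM⟩ := flatten_map_heightAux_append_eq_cons h ts
    rw [List.map_cons, List.flatten_cons, List.append_assoc, hM, descents_append, ← hM,
      ihts fun t' ht' => ih t' (List.mem_cons_of_mem t ht'),
      descents_append_succ (heightAux_ne_nil (h + 1) t)
        fun _ hx => Nat.le_of_succ_le (le_of_mem_heightAux hx),
      ← ih t List.mem_cons_self]
    simp

theorem contourAux_eq_descents (h : ℕ) (τ : PTree) :
    contourAux h τ = descents (heightAux h τ ++ [h + 1]) := by
  induction τ using induction generalizing h with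
  | node ts ih =>
    obtain ⟨M, hM⟩ := flatten_map_heightAux_append_eq_cons h ts
    rw [contourAux_node, heightAux_node, List.cons_append, hM, descents_cons_cons,
      descent_succ_self, ← hM, descents_flatten_map_heightAux h ts fun t ht => ih t ht (h + 1)]
    rfl

theorem drop_descents_drop {L : List ℕ} {p : ℕ} (hp : p + 1 < L.length) :
    (descents (L.drop p)).drop (L.getD p 0 + 2 - L.getD (p + 1) 0) =
      descents (L.drop (p + 1)) := by
  rw [List.drop_eq_getElem_cons (by omega : p < L.length), List.drop_eq_getElem_cons hp,
    descents_cons_cons, List.getD_eq_getElem _ _ (by omega), List.getD_eq_getElem _ _ hp,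
    List.drop_left' (length_descent _ _)]

theorem getD_descents_drop {L : List ℕ} {p j : ℕ} (hp : p + 1 < L.length)
    (hj : j < L.getD p 0 + 2 - L.getD (p + 1) 0) :
    (descents (L.drop p)).getD j 0 = L.getD p 0 - j := by
  rw [List.getD_eq_getElem _ _ hp] at hj
  rw [List.getD_eq_getElem _ _ (by omega : p < L.length)] at hj ⊢
  rw [List.drop_eq_getElem_cons (by omega : p < L.length), List.drop_eq_getElem_cons hp,
    descents_cons_cons, List.getD_append _ _ _ _ (by simpa using hj), getD_descent hj]

theorem progeny_pos (τ : PTree) : 0 < progeny τ := by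
  obtain ⟨l, hl⟩ := exists_heightAux_eq_cons 0 τ
  simp [progeny, hl]

theorem H_zero (τ : PTree) : H τ 0 = 0 := by
  obtain ⟨l, hl⟩ := exists_heightAux_eq_cons 0 τ
  simp [H, hl]

theorem H_of_progeny_le {τ : PTree} {p : ℕ} (hp : progeny τ ≤ p) : H τ p = 0 :=
  List.getD_eq_default _ _ hp

theorem H_pos {τ : PTree} {p : ℕ} (hp₀ : 0 < p) (hp : p < progeny τ) : 0 < H τ p := by
  obtain ⟨q, rfl⟩ : ∃ q, p = q + 1 := ⟨p - 1, by omega⟩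
  cases τ with
  | node ts =>
    simp only [progeny, heightAux_node, zero_add, List.length_cons] at hp
    have hq : q < (ts.map (heightAux 1)).flatten.length := by omega
    rw [H, heightAux_node, zero_add, List.getD_cons_succ, List.getD_eq_getElem _ _ hq]
    have hmem := List.getElem_mem hq
    simp only [List.mem_flatten, List.mem_map] at hmem
    obtain ⟨_, ⟨t, -, rfl⟩, hx⟩ := hmem
    exact le_of_mem_heightAux hx

theorem H_succ_le {τ : PTree} {p : ℕ} (hp : p + 1 < progeny τ) : H τ (p + 1) ≤ H τ p + 1 := by
  have := List.isChain_iff_getElem.mp (isChain_heightAux 0 τ) p hp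
  rwa [H, H, List.getD_eq_getElem _ _ hp, List.getD_eq_getElem _ _ (by unfold progeny at hp; omega)]

theorem H_le_self (τ : PTree) (p : ℕ) : H τ p ≤ p := by
  induction p with
  | zero => exact (H_zero τ).le
  | succ p ih =>
    rcases lt_or_ge (p + 1) (progeny τ) with hp | hp
    · exact (H_succ_le hp).trans (by omega)
    · exact (H_of_progeny_le hp).trans_le (Nat.zero_le _)

/-- The heights in lexicographical order followed by a sentinel `1`, which makes the last descent
end at the root. -/
def paddedHeights (τ : PTree) : List ℕ := heightAux 0 τ ++ [1]

theorem length_paddedHeights (τ : PTree) : (paddedHeights τ).length = progeny τ + 1 := by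
  simp [paddedHeights, progeny]

theorem getD_paddedHeights {τ : PTree} {p : ℕ} (hp : p < progeny τ) :
    (paddedHeights τ).getD p 0 = H τ p :=
  List.getD_append _ _ _ _ hp

theorem getD_paddedHeights_progeny (τ : PTree) : (paddedHeights τ).getD (progeny τ) 0 = 1 := by
  simp [paddedHeights, progeny]

theorem H_le_getD_paddedHeights (τ : PTree) (p : ℕ) : H τ p ≤ (paddedHeights τ).getD p 0 := by
  rcases lt_or_ge p (progeny τ) with hp | hp
  · exact (getD_paddedHeights hp).ge
  · exact (H_of_progeny_le hp).trans_le (Nat.zero_le _)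

theorem one_le_getD_paddedHeights_succ {τ : PTree} {p : ℕ} (hp : p < progeny τ) :
    1 ≤ (paddedHeights τ).getD (p + 1) 0 := by
  rcases (show p + 1 ≤ progeny τ from hp).lt_or_eq with hp' | hp'
  · rw [getD_paddedHeights hp']
    exact H_pos p.succ_pos hp'
  · rw [hp', getD_paddedHeights_progeny]

theorem getD_paddedHeights_succ_le {τ : PTree} {p : ℕ} (hp : p < progeny τ) :
    (paddedHeights τ).getD (p + 1) 0 ≤ H τ p + 1 := by
  rcases (show p + 1 ≤ progeny τ from hp).lt_or_eq with hp' | hp'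
  · rw [getD_paddedHeights hp']
    exact H_succ_le hp'
  · rw [hp', getD_paddedHeights_progeny]
    omega

theorem drop_contourAux {τ : PTree} {p : ℕ} (hp : p < progeny τ) :
    (contourAux 0 τ).drop (2 * p - H τ p) = descents ((paddedHeights τ).drop p) := by
  induction p with
  | zero => simp [H_zero, contourAux_eq_descents, paddedHeights]
  | succ p ih =>
    have hle := H_le_self τ p
    have hsucc := H_succ_le hp
    rw [show 2 * (p + 1) - H τ (p + 1) = (2 * p - H τ p) + (H τ p + 2 - H τ (p + 1)) by omega,
      ← List.drop_drop, ih (by omega), ← getD_paddedHeights (by omega : p < progeny τ),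
      ← getD_paddedHeights hp, drop_descents_drop (by simp [length_paddedHeights]; omega)]

def visitTime (τ : PTree) (p : ℕ) : ℕ :=
  if p = progeny τ then 2 * progeny τ - 2 else 2 * p - H τ p

theorem b_eq_visitTime (τ : PTree) (p : ℕ) : b τ p = visitTime τ p := by
  have := progeny_pos τ
  have := H_le_self τ p
  unfold b visitTime
  split_ifs <;> rw [Nat.cast_sub (by omega)] <;> push_cast <;> ring

theorem visitTime_of_lt {τ : PTree} {p : ℕ} (hp : p < progeny τ) :
    visitTime τ p = 2 * p - H τ p :=
  if_neg hp.ne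

theorem cseq_visitTime_add {τ : PTree} {p j : ℕ} (hp : p < progeny τ)
    (hj : j < H τ p + 2 - (paddedHeights τ).getD (p + 1) 0) :
    cseq τ (visitTime τ p + j) = H τ p - j := by
  rw [← getD_paddedHeights hp] at hj
  rw [visitTime_of_lt hp, cseq, List.getD_eq_getElem?_getD, ← List.getElem?_drop,
    ← List.getD_eq_getElem?_getD, drop_contourAux hp,
    getD_descents_drop (by simp [length_paddedHeights]; omega) hj,
    getD_paddedHeights hp]

theorem cseq_visitTime {τ : PTree} {p : ℕ} (hp : p < progeny τ) :
    cseq τ (visitTime τ p) = H τ p := by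
  have := getD_paddedHeights_succ_le hp
  simpa using cseq_visitTime_add hp (j := 0) (by omega)

theorem C_eq_linInterp (τ : PTree) : C τ = linInterp fun k => (cseq τ k : ℝ) := rfl

theorem abs_cseq_sub_H_le {τ : PTree} {p k : ℕ} (hp : p < progeny τ) (hk : visitTime τ p ≤ k)
    (hk' : k ≤ visitTime τ (p + 1)) :
    |(cseq τ k : ℝ) - H τ p| ≤ |(H τ (p + 1) : ℝ) - H τ p| + 1 := by
  obtain ⟨j, rfl⟩ := Nat.exists_eq_add_of_le hk
  have hH := H_le_self τ p
  have h₁ := one_le_getD_paddedHeights_succ hp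
  have h₂ := H_le_getD_paddedHeights τ (p + 1)
  by_cases hj : j < H τ p + 2 - (paddedHeights τ).getD (p + 1) 0
  · have hj' : (j : ℝ) + H τ (p + 1) ≤ H τ p + 1 := by exact_mod_cast (by omega)
    rw [cseq_visitTime_add hp hj, Nat.cast_sub (by omega), sub_sub_cancel_left, abs_neg,
      Nat.abs_cast, abs_sub_comm]
    linarith [le_abs_self ((H τ p : ℝ) - H τ (p + 1))]
  · -- `b_{p+1}` is reached only when `p + 1 < ζ(τ)`, and then it is the first visit of `u(p+1)`
    have hp' : p + 1 < progeny τ := by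
      by_contra hn
      have hn : p + 1 = progeny τ := by omega
      rw [visitTime_of_lt hp, visitTime, if_pos hn] at hk'
      rw [hn, getD_paddedHeights_progeny] at hj
      omega
    have hend : visitTime τ p + j = visitTime τ (p + 1) := by
      rw [visitTime_of_lt hp, visitTime_of_lt hp'] at hk' ⊢
      rw [getD_paddedHeights hp'] at hj
      have := H_succ_le hp'
      omega
    rw [hend, cseq_visitTime hp']
    linarith

end PTree

open PTree in
/-- Contour/height comparison: C_{b_p}(τ) = H_p(τ), and for 0 ≤ p < ζ(τ),
sup_{t ∈ [b_p, b_{p+1}]} |C_t(τ) − H_p(τ)| ≤ |H_{p+1}(τ) − H_p(τ)| + 1. -/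
theorem stmt15 (τ : PTree) (p : ℕ) (hp : p < progeny τ) :
    C τ (b τ p) = H τ p ∧
      ∀ t ∈ Set.Icc (b τ p) (b τ (p + 1)),
        |C τ t - (H τ p : ℝ)| ≤ |(H τ (p + 1) : ℝ) - (H τ p : ℝ)| + 1 := by
  rw [b_eq_visitTime, b_eq_visitTime, C_eq_linInterp]
  exact ⟨by rw [linInterp_natCast, cseq_visitTime hp],
    fun t => abs_linInterp_sub_le fun k hk hk' => abs_cseq_sub_H_le hp hk hk'⟩
end
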